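/- Let C ⊆ ℝ^n be a compact convex set with span(C − C) = ℝ^n that is (α,p)-uniformly convex with respect to the C-norm ‖·‖_C for some α > 0 and p ≥ 2, and let f : ℝ^n → ℝ be convex, differentiable on an open set containing C, L-smooth over C with respect to ‖·‖_C for some L > 0, and satisfy a (μ,θ)-Hölderian error bound with respect to ‖·‖_C for some μ > 0 and θ ∈ [0,1/2]. Then (C,f) satisfies the weak (M,r)-growth property with M = L·(μ/α)^{2/p} and r = 2θ/p. -/

import Mathlib

/-!
Write `N = ‖v - x‖_C`. By uniform convexity, `C` contains the point `γ v + (1 - γ) x` moved by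
`γ (1 - γ) α N ^ p` in any `C`-unit direction, so comparing with the Frank–Wolfe vertex gives
`α N ^ p ⟪∇f(x), x - y⟫ ≤ ‖x - y‖_C · gap(x)` for all `y ∈ C`. For a minimiser `y`, convexity gives
`subopt(x) ≤ ⟪∇f(x), x - y⟫`; taking the infimum over minimisers and applying the error bound yields
`α N ^ p subopt ≤ μ subopt ^ θ gap`. Raising this to the power `2 / p`, using `subopt ≤ gap` and the
smoothness bound `D_f(x + η (v - x), x) ≤ L η² N² / 2` gives the weak growth inequality.
-/

open Set Finset Real Pointwise

noncomputable section

abbrev Eucl (n : ℕ) := EuclideanSpace ℝ (Fin n)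

variable {n : ℕ}

/-- A Frank–Wolfe vertex at `x`: a minimizer over `C` of the linear function `y ↦ ⟪∇f(x), y⟫`. -/
def IsFWVertex (C : Set (Eucl n)) (f : Eucl n → ℝ) (x v : Eucl n) : Prop :=
  v ∈ C ∧ ∀ y ∈ C, (inner ℝ (gradient f x) v : ℝ) ≤ (inner ℝ (gradient f x) y : ℝ)

/-- The Wolfe gap `gap(x) = max_{y ∈ C} ⟪∇f(x), x - y⟫`. -/
def gapF (C : Set (Eucl n)) (f : Eucl n → ℝ) (x : Eucl n) : ℝ :=
  sSup ((fun y => (inner ℝ (gradient f x) (x - y) : ℝ)) '' C)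

/-- The primal suboptimality gap `subopt(x) = f(x) - min_{y ∈ C} f(y)`. -/
def suboptF (C : Set (Eucl n)) (f : Eucl n → ℝ) (x : Eucl n) : ℝ :=
  f x - sInf (f '' C)

/-- Bregman divergence `D_f(y, x) = f(y) - f(x) - ⟪∇f(x), y - x⟫`. -/
def bregmanD (f : Eucl n → ℝ) (y x : Eucl n) : ℝ :=
  f y - f x - (inner ℝ (gradient f x) (y - x) : ℝ)

/-- Strong `(M, r)`-growth property. -/
def StrongGrowth (C : Set (Eucl n)) (f : Eucl n → ℝ) (M r : ℝ) : Prop :=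
  ∀ x ∈ C, ∀ v, IsFWVertex C f x v → ∀ η ∈ Icc (0:ℝ) 1,
    bregmanD f (x + η • (v - x)) x ≤ M * η ^ 2 / 2 * gapF C f x ^ r

/-- Weak `(M, r)`-growth property. -/
def WeakGrowth (C : Set (Eucl n)) (f : Eucl n → ℝ) (M r : ℝ) : Prop :=
  ∀ x ∈ C, ∀ v, IsFWVertex C f x v → ∀ η ∈ Icc (0:ℝ) 1,
    bregmanD f (x + η • (v - x)) x * suboptF C f x ^ (1 - r) ≤ M * η ^ 2 / 2 * gapF C f x

/-- Gaps `(m, r)`-growth property. -/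
def GapsGrowth (C : Set (Eucl n)) (f : Eucl n → ℝ) (m r : ℝ) : Prop :=
  ∀ x ∈ C, m * suboptF C f x ^ (1 - r) ≤ gapF C f x

/-- `primaldual_t = min_{0 ≤ k ≤ t} (f(x_t) - f(x_k) + gap_k)`. -/
def primaldualSeq (C : Set (Eucl n)) (f : Eucl n → ℝ) (x : ℕ → Eucl n) (t : ℕ) : ℝ :=
  (Finset.range (t + 1)).inf' (Finset.nonempty_range_iff.mpr (Nat.succ_ne_zero t))
    (fun k => f (x t) - f (x k) + gapF C f (x k))

/-- The affine-invariant `C`-norm: the gauge (Minkowski functional) of `½(C - C)`. -/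
def CnormFn (C : Set (Eucl n)) : Eucl n → ℝ :=
  gauge ((2 : ℝ)⁻¹ • (C - C))

/-- The dual norm of the `C`-norm: `‖g‖_C* = sup {⟪g, x⟫ : ‖x‖_C ≤ 1}`. -/
def dualCnormFn (C : Set (Eucl n)) (g : Eucl n) : ℝ :=
  sSup ((fun x => (inner ℝ g x : ℝ)) '' {x : Eucl n | CnormFn C x ≤ 1})

/-- `f` satisfies a `(μ, θ)`-Hölderian error bound on `C` with respect to the norm-like
function `nrm`. -/
def HolderianErrorBound (C : Set (Eucl n)) (f : Eucl n → ℝ) (nrm : Eucl n → ℝ)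
    (μ θ : ℝ) : Prop :=
  ∀ x ∈ C,
    sInf ((fun y => nrm (x - y)) '' {y ∈ C | ∀ z ∈ C, f y ≤ f z}) ≤
      μ * (f x - sInf (f '' C)) ^ θ

/-- `f` is `L`-smooth over `C` with respect to the norm-like function `nrm`. -/
def SmoothOver (C : Set (Eucl n)) (f : Eucl n → ℝ) (nrm : Eucl n → ℝ) (L : ℝ) : Prop :=
  ∀ x ∈ C, ∀ y ∈ C,
    f y ≤ f x + (inner ℝ (gradient f x) (y - x) : ℝ) + L / 2 * nrm (x - y) ^ 2

/-- `C` is `(α, p)`-uniformly convex with respect to the norm-like function `nrm`. -/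
def UniformlyConvexSet (C : Set (Eucl n)) (nrm : Eucl n → ℝ) (α p : ℝ) : Prop :=
  ∀ x ∈ C, ∀ y ∈ C, ∀ γ ∈ Icc (0 : ℝ) 1, ∀ z : Eucl n, nrm z = 1 →
    γ • x + (1 - γ) • y + (γ * (1 - γ) * α * nrm (x - y) ^ p) • z ∈ C


open Filter Topology

theorem ConvexOn.add_le_of_hasFDerivAt {E : Type*} [NormedAddCommGroup E] [NormedSpace ℝ E]
    {C : Set E} {f : E → ℝ} {f' : E →L[ℝ] ℝ} {x y : E} (hf : ConvexOn ℝ C f)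
    (hx : x ∈ C) (hy : y ∈ C) (hf' : HasFDerivAt f f' x) :
    f x + f' (y - x) ≤ f y := by
  have hline : ConvexOn ℝ (Icc 0 1) (fun t : ℝ => f (AffineMap.lineMap x y t)) :=
    (hf.comp_affineMap _).subset (fun t ht => hf.1.lineMap_mem hx hy ht) (convex_Icc 0 1)
  have hderiv : HasDerivAt (fun t : ℝ => f (AffineMap.lineMap x y t)) (f' (y - x)) 0 := by
    have hpath : HasDerivAt (fun t : ℝ => AffineMap.lineMap x y t) (y - x) 0 :=
      AffineMap.hasDerivAt_lineMap
    exact (by simpa using hf' : HasFDerivAt f f' (AffineMap.lineMap x y (0 : ℝ))).comp_hasDerivAt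
      0 hpath
  have := hline.le_slope_of_hasDerivAt (by simp) (by simp) zero_lt_one hderiv
  simp only [slope_def_field, AffineMap.lineMap_apply_zero, AffineMap.lineMap_apply_one,
    sub_zero, div_one] at this
  linarith

theorem ConvexOn.add_inner_gradient_le {F : Type*} [NormedAddCommGroup F]
    [InnerProductSpace ℝ F] [CompleteSpace F] {C : Set F} {f : F → ℝ} {x y : F}
    (hf : ConvexOn ℝ C f) (hx : x ∈ C) (hy : y ∈ C) (hd : DifferentiableAt ℝ f x) :
    f x + inner ℝ (gradient f x) (y - x) ≤ f y := by
  simpa using hf.add_le_of_hasFDerivAt hx hy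
    (hasGradientAt_iff_hasFDerivAt.mp hd.hasGradientAt)

/-- Unlike `gauge_eq_zero`, this does not need `s` to be absorbent. -/
theorem eq_zero_of_gauge_eq_zero {E : Type*} [NormedAddCommGroup E] [NormedSpace ℝ E]
    {s : Set E} (hs : Bornology.IsBounded s) {x : E} {a : ℝ} (ha : 0 < a) (hx : x ∈ a • s)
    (h : gauge s x = 0) : x = 0 := by
  obtain ⟨R, hR, hsR⟩ := hs.exists_pos_norm_le
  by_contra hx0
  have hε : 0 < ‖x‖ / (2 * R) := by positivity
  have hne : {r ∈ Ioi (0 : ℝ) | x ∈ r • s}.Nonempty := ⟨a, ha, hx⟩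
  rw [gauge_def] at h
  obtain ⟨r, ⟨hr, y, hy, rfl⟩, hrε⟩ := exists_lt_of_csInf_lt hne (h ▸ hε)
  have hle : ‖r • y‖ ≤ r * R := by
    rw [norm_smul, Real.norm_of_nonneg hr.le]
    exact mul_le_mul_of_nonneg_left (hsR y hy) hr.le
  rw [lt_div_iff₀ (by positivity)] at hrε
  have hpos : 0 < ‖r • y‖ := norm_pos_iff.mpr hx0
  nlinarith

section Cnorm

variable {C : Set (Eucl n)}

theorem cnormFn_nonneg (w : Eucl n) : 0 ≤ CnormFn C w :=
  gauge_nonneg w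

theorem cnormFn_neg (w : Eucl n) : CnormFn C (-w) = CnormFn C w := by
  refine gauge_neg (fun u hu => ?_) w
  obtain ⟨_, ⟨a, ha, b, hb, rfl⟩, rfl⟩ := hu
  exact ⟨b - a, sub_mem_sub hb ha, by rw [← smul_neg, neg_sub]⟩

theorem cnormFn_sub_comm (x y : Eucl n) : CnormFn C (x - y) = CnormFn C (y - x) := by
  rw [← neg_sub, cnormFn_neg]

theorem cnormFn_smul_of_nonneg {a : ℝ} (ha : 0 ≤ a) (w : Eucl n) :
    CnormFn C (a • w) = a * CnormFn C w :=
  gauge_smul_of_nonneg ha w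

theorem eq_of_cnormFn_sub_eq_zero (hC : Bornology.IsBounded C) {x y : Eucl n} (hx : x ∈ C)
    (hy : y ∈ C) (h : CnormFn C (x - y) = 0) : x = y := by
  have hmem : x - y ∈ (2 : ℝ) • ((2 : ℝ)⁻¹ • (C - C)) := by
    rw [smul_inv_smul₀ two_ne_zero]
    exact sub_mem_sub hx hy
  exact sub_eq_zero.mp (eq_zero_of_gauge_eq_zero ((hC.sub hC).smul₀ _) two_pos hmem h)

end Cnorm

section FrankWolfe

variable {C : Set (Eucl n)} {f : Eucl n → ℝ} {x v : Eucl n}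

theorem IsFWVertex.gapF_eq (hv : IsFWVertex C f x v) :
    gapF C f x = inner ℝ (gradient f x) (x - v) := by
  refine IsGreatest.csSup_eq ⟨⟨v, hv.1, rfl⟩, ?_⟩
  rintro _ ⟨y, hy, rfl⟩
  simp only [inner_sub_right]
  linarith [hv.2 y hy]

theorem IsFWVertex.inner_le_gapF (hv : IsFWVertex C f x v) {y : Eucl n} (hy : y ∈ C) :
    inner ℝ (gradient f x) (x - y) ≤ gapF C f x := by
  rw [hv.gapF_eq]
  simp only [inner_sub_right]
  linarith [hv.2 y hy]

theorem IsFWVertex.gapF_nonneg (hv : IsFWVertex C f x v) (hx : x ∈ C) : 0 ≤ gapF C f x := by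
  simpa using hv.inner_le_gapF hx

theorem suboptF_eq_of_forall_le {y : Eucl n} (hy : y ∈ C) (hmin : ∀ z ∈ C, f y ≤ f z) :
    suboptF C f x = f x - f y := by
  have hleast : IsLeast (f '' C) (f y) :=
    ⟨⟨y, hy, rfl⟩, by rintro _ ⟨z, hz, rfl⟩; exact hmin z hz⟩
  rw [suboptF, hleast.csInf_eq]

theorem suboptF_le_inner_gradient (hf : ConvexOn ℝ C f) (hd : DifferentiableAt ℝ f x)
    (hx : x ∈ C) {y : Eucl n} (hy : y ∈ C) (hmin : ∀ z ∈ C, f y ≤ f z) :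
    suboptF C f x ≤ inner ℝ (gradient f x) (x - y) := by
  have := hf.add_inner_gradient_le hx hy hd
  rw [suboptF_eq_of_forall_le hy hmin, ← neg_sub y x, inner_neg_right]
  linarith

end FrankWolfe

section UniformConvexity

variable {C : Set (Eucl n)} {f : Eucl n → ℝ} {x v : Eucl n} {α p : ℝ}

/-- Comparing `v` with `γ • v + (1 - γ) • x + (γ * (1 - γ) * α * ‖v - x‖ ^ p) • z ∈ C` gives the
bound up to a factor `γ < 1`; let `γ → 1`. -/
theorem UniformlyConvexSet.mul_inner_neg_le_gapF {nrm : Eucl n → ℝ}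
    (hunif : UniformlyConvexSet C nrm α p) (hx : x ∈ C) (hv : IsFWVertex C f x v) {z : Eucl n}
    (hz : nrm z = 1) :
    α * nrm (v - x) ^ p * inner ℝ (gradient f x) (-z) ≤ gapF C f x := by
  set A := α * nrm (v - x) ^ p * inner ℝ (gradient f x) (-z)
  have hγ : ∀ γ ∈ Ioo (0 : ℝ) 1, γ * A ≤ gapF C f x := by
    intro γ hγ
    have hle := hv.inner_le_gapF (hunif v hv.1 x hx γ ⟨hγ.1.le, hγ.2.le⟩ z hz)
    have hexp : inner ℝ (gradient f x)
        (x - (γ • v + (1 - γ) • x + (γ * (1 - γ) * α * nrm (v - x) ^ p) • z))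
        = γ * gapF C f x + γ * (1 - γ) * A := by
      simp only [hv.gapF_eq, A, inner_sub_right, inner_add_right, real_inner_smul_right,
        inner_neg_right]
      ring
    rw [hexp] at hle
    nlinarith [hγ.1, hγ.2]
  have hlim : Tendsto (fun γ : ℝ => γ * A) (𝓝[<] 1) (𝓝 A) :=
    ((continuous_mul_const A).tendsto' 1 A (one_mul A)).mono_left nhdsWithin_le_nhds
  exact le_of_tendsto hlim (eventually_of_mem (Ioo_mem_nhdsLT zero_lt_one) hγ)

theorem UniformlyConvexSet.mul_inner_le_cnormFn_mul_gapF
    (hC : Bornology.IsBounded C) (hunif : UniformlyConvexSet C (CnormFn C) α p) (hx : x ∈ C)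
    (hv : IsFWVertex C f x v) {y : Eucl n} (hy : y ∈ C) :
    α * CnormFn C (v - x) ^ p * inner ℝ (gradient f x) (x - y)
      ≤ CnormFn C (x - y) * gapF C f x := by
  rcases (cnormFn_nonneg (x - y) (C := C)).eq_or_lt with hc | hc
  · obtain rfl := eq_of_cnormFn_sub_eq_zero hC hx hy hc.symm
    simp [CnormFn]
  set c := CnormFn C (x - y)
  have hz : CnormFn C (c⁻¹ • (y - x)) = 1 := by
    rw [cnormFn_smul_of_nonneg (inv_nonneg.mpr hc.le), ← cnormFn_sub_comm,
      inv_mul_cancel₀ hc.ne']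
  have key := hunif.mul_inner_neg_le_gapF hx hv hz
  rw [← smul_neg, neg_sub, real_inner_smul_right] at key
  calc α * CnormFn C (v - x) ^ p * inner ℝ (gradient f x) (x - y)
      = c * (α * CnormFn C (v - x) ^ p * (c⁻¹ * inner ℝ (gradient f x) (x - y))) := by
        rw [mul_left_comm c, mul_inv_cancel_left₀ hc.ne']
    _ ≤ c * gapF C f x := mul_le_mul_of_nonneg_left key hc.le

end UniformConvexity

theorem le_csInf_image_mul {ι : Type*} {S : Set ι} (hS : S.Nonempty) {d : ι → ℝ} {a g : ℝ}
    (hg : 0 ≤ g) (h : ∀ y ∈ S, a ≤ d y * g) : a ≤ sInf (d '' S) * g := by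
  rcases hg.eq_or_lt with rfl | hg
  · obtain ⟨y, hy⟩ := hS
    simpa using h y hy
  rw [← div_le_iff₀ hg]
  exact le_csInf (hS.image d) (by rintro _ ⟨y, hy, rfl⟩; exact (div_le_iff₀ hg).mpr (h y hy))

theorem HolderianErrorBound.mul_suboptF_le {C : Set (Eucl n)} {f : Eucl n → ℝ} {x v y : Eucl n}
    {α p μ θ : ℝ} (hHEB : HolderianErrorBound C f (CnormFn C) μ θ) (hC : Bornology.IsBounded C)
    (hunif : UniformlyConvexSet C (CnormFn C) α p) (hα : 0 ≤ α) (hf : ConvexOn ℝ C f)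
    (hd : DifferentiableAt ℝ f x) (hx : x ∈ C) (hv : IsFWVertex C f x v) (hy : y ∈ C)
    (hmin : ∀ z ∈ C, f y ≤ f z) :
    α * CnormFn C (v - x) ^ p * suboptF C f x ≤ μ * suboptF C f x ^ θ * gapF C f x := by
  have hbound : ∀ y ∈ {y ∈ C | ∀ z ∈ C, f y ≤ f z},
      α * CnormFn C (v - x) ^ p * suboptF C f x ≤ CnormFn C (x - y) * gapF C f x := by
    rintro y ⟨hy, hmin⟩
    have hNp : 0 ≤ α * CnormFn C (v - x) ^ p := mul_nonneg hα (rpow_nonneg (cnormFn_nonneg _) _)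
    exact (mul_le_mul_of_nonneg_left (suboptF_le_inner_gradient hf hd hx hy hmin) hNp).trans
      (hunif.mul_inner_le_cnormFn_mul_gapF hC hx hv hy)
  calc α * CnormFn C (v - x) ^ p * suboptF C f x
      ≤ sInf ((fun y => CnormFn C (x - y)) '' {y ∈ C | ∀ z ∈ C, f y ≤ f z}) * gapF C f x :=
        le_csInf_image_mul (by exact ⟨y, hy, hmin⟩) (hv.gapF_nonneg hx) hbound
    _ ≤ μ * suboptF C f x ^ θ * gapF C f x :=
        mul_le_mul_of_nonneg_right (hHEB x hx) (hv.gapF_nonneg hx)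

theorem sq_mul_rpow_le_of_mul_rpow_le {N h g α μ p θ : ℝ} (hN : 0 ≤ N) (hh : 0 ≤ h)
    (hhg : h ≤ g) (hα : 0 < α) (hμ : 0 < μ) (hp : 2 ≤ p) (hθ : θ ≤ 1 / 2)
    (H : α * N ^ p * h ≤ μ * h ^ θ * g) :
    N ^ 2 * h ^ (1 - 2 * θ / p) ≤ (μ / α) ^ (2 / p) * g := by
  have hp0 : 0 < p := by linarith
  have hg : 0 ≤ g := hh.trans hhg
  rcases hh.eq_or_lt with rfl | hh
  · have hr : 2 * θ / p < 1 := by rw [div_lt_one hp0]; linarith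
    rw [zero_rpow (sub_pos.mpr hr).ne', mul_zero]
    positivity
  have h1 : N ^ p * h ^ (1 - θ) ≤ μ / α * g := by
    rw [div_mul_eq_mul_div, le_div_iff₀ hα, ← mul_le_mul_iff_left₀ (rpow_pos_of_pos hh θ)]
    calc N ^ p * h ^ (1 - θ) * α * h ^ θ = α * N ^ p * (h ^ (1 - θ) * h ^ θ) := by ring
      _ = α * N ^ p * h := by rw [← rpow_add hh, sub_add_cancel, rpow_one]
      _ ≤ μ * h ^ θ * g := H
      _ = μ * g * h ^ θ := by ring
  have h2 := rpow_le_rpow (by positivity) h1 (by positivity : 0 ≤ 2 / p)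
  rw [mul_rpow (by positivity) (by positivity), mul_rpow (by positivity) hg, ← rpow_mul hN,
    ← rpow_mul hh.le, mul_div_cancel₀ _ hp0.ne', rpow_two] at h2
  have h3 : h ^ (1 - 2 / p) ≤ g ^ (1 - 2 / p) :=
    rpow_le_rpow hh.le hhg (by rw [sub_nonneg, div_le_one hp0]; exact hp)
  calc N ^ 2 * h ^ (1 - 2 * θ / p) = N ^ 2 * h ^ ((1 - θ) * (2 / p)) * h ^ (1 - 2 / p) := by
        rw [mul_assoc, ← rpow_add hh]; congr 2; ring
    _ ≤ (μ / α) ^ (2 / p) * g ^ (2 / p) * g ^ (1 - 2 / p) :=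
        mul_le_mul h2 h3 (by positivity) (by positivity)
    _ = (μ / α) ^ (2 / p) * g := by
        rw [mul_assoc, ← rpow_add (hh.trans_le hhg)]; norm_num

theorem SmoothOver.bregmanD_le {C : Set (Eucl n)} {f : Eucl n → ℝ} {x v : Eucl n} {L η : ℝ}
    (hsmooth : SmoothOver C f (CnormFn C) L) (hC : Convex ℝ C) (hx : x ∈ C) (hv : v ∈ C)
    (hη : η ∈ Icc (0 : ℝ) 1) :
    bregmanD f (x + η • (v - x)) x ≤ L / 2 * (η * CnormFn C (v - x)) ^ 2 := by
  have h := hsmooth x hx _ (hC.add_smul_sub_mem hx hv hη)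
  rw [sub_add_cancel_left, ← smul_neg, neg_sub, cnormFn_smul_of_nonneg hη.1,
    cnormFn_sub_comm] at h
  rw [bregmanD]
  linarith

theorem weak_growth_of_uniformly_convex_heb_general
    (n : ℕ) (C : Set (Eucl n)) (f : Eucl n → ℝ)
    (hCcomp : IsCompact C) (hCconv : Convex ℝ C)
    (α p : ℝ) (hα : 0 < α) (hp : 2 ≤ p)
    (hunif : UniformlyConvexSet C (CnormFn C) α p)
    (hfconv : ConvexOn ℝ C f)
    (U : Set (Eucl n)) (hUopen : IsOpen U) (hCU : C ⊆ U)
    (hfdiff : DifferentiableOn ℝ f U)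
    (L : ℝ) (hL : 0 < L) (hsmooth : SmoothOver C f (CnormFn C) L)
    (μ θ : ℝ) (hμ : 0 < μ) (hθ : θ ∈ Icc (0 : ℝ) (1 / 2))
    (hHEB : HolderianErrorBound C f (CnormFn C) μ θ) :
    WeakGrowth C f (L * (μ / α) ^ (2 / p)) (2 * θ / p) := by
  intro x hx v hv η hη
  obtain ⟨y, hy, hmin⟩ := hCcomp.exists_isMinOn ⟨x, hx⟩ (hfdiff.continuousOn.mono hCU)
  rw [isMinOn_iff] at hmin
  have hd : DifferentiableAt ℝ f x := hfdiff.differentiableAt (hUopen.mem_nhds (hCU hx))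
  have hsubopt_nonneg : 0 ≤ suboptF C f x := by
    rw [suboptF_eq_of_forall_le hy hmin]
    linarith [hmin x hx]
  have hsubopt_le_gap : suboptF C f x ≤ gapF C f x :=
    (suboptF_le_inner_gradient hfconv hd hx hy hmin).trans (hv.inner_le_gapF hy)
  have hN := sq_mul_rpow_le_of_mul_rpow_le (cnormFn_nonneg (v - x)) hsubopt_nonneg
    hsubopt_le_gap hα hμ hp hθ.2
    (hHEB.mul_suboptF_le hCcomp.isBounded hunif hα.le hfconv hd hx hv hy hmin)
  calc bregmanD f (x + η • (v - x)) x * suboptF C f x ^ (1 - 2 * θ / p)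
      ≤ L / 2 * (η * CnormFn C (v - x)) ^ 2 * suboptF C f x ^ (1 - 2 * θ / p) :=
        mul_le_mul_of_nonneg_right (hsmooth.bregmanD_le hCconv hx hv.1 hη)
          (rpow_nonneg hsubopt_nonneg _)
    _ = L * η ^ 2 / 2 * (CnormFn C (v - x) ^ 2 * suboptF C f x ^ (1 - 2 * θ / p)) := by ring
    _ ≤ L * η ^ 2 / 2 * ((μ / α) ^ (2 / p) * gapF C f x) :=
        mul_le_mul_of_nonneg_left hN (by positivity)
    _ = L * (μ / α) ^ (2 / p) * η ^ 2 / 2 * gapF C f x := by ring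

/-- **Proposition (weak growth from uniform convexity of `C` and a Hölderian error bound).** -/
theorem weak_growth_of_uniformly_convex_heb
    (n : ℕ) (C : Set (Eucl n)) (f : Eucl n → ℝ)
    (hCcomp : IsCompact C) (hCconv : Convex ℝ C) (hCne : C.Nonempty)
    (hspan : Submodule.span ℝ (C - C) = ⊤)
    (α p : ℝ) (hα : 0 < α) (hp : 2 ≤ p)
    (hunif : UniformlyConvexSet C (CnormFn C) α p)
    (hfconv : ConvexOn ℝ C f)
    (U : Set (Eucl n)) (hUopen : IsOpen U) (hCU : C ⊆ U)
    (hfdiff : DifferentiableOn ℝ f U)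
    (L : ℝ) (hL : 0 < L) (hsmooth : SmoothOver C f (CnormFn C) L)
    (μ θ : ℝ) (hμ : 0 < μ) (hθ : θ ∈ Icc (0 : ℝ) (1 / 2))
    (hHEB : HolderianErrorBound C f (CnormFn C) μ θ) :
    WeakGrowth C f (L * (μ / α) ^ (2 / p)) (2 * θ / p) :=
  weak_growth_of_uniformly_convex_heb_general n C f hCcomp hCconv α p hα hp hunif hfconv U hUopen
    hCU hfdiff L hL hsmooth μ θ hμ hθ hHEB
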